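/- arXiv:2306.01608 — 2 statements merged into one kernel-verified Lean document; each statement's English description precedes it below -/
import Mathlib

section
/- For r ≥ 2, let G₁ and G₂ be connected graphs of order at least r+1, each containing an r-clique, and let G be the r-gluing of G₁ and G₂ obtained by identifying a chosen r-clique of G₁ with a chosen r-clique of G₂ (matching vertices in a fixed bijection). Then γ_st(G) ≤ γ_st(G₁) + γ_st(G₂) + 1. -/
open SimpleGraph

/-- The degree of a vertex `v` in the graph `G`. -/
noncomputable def deg {V : Type*} (G : SimpleGraph V) (v : V) : ℕ :=
  (G.neighborSet v).ncard

/-- `D` is a strong dominating set of `G`: every vertex outside `D` has a neighbor in `D`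
of at least its own degree. -/
def IsSDS {V : Type*} (G : SimpleGraph V) (D : Set V) : Prop :=
  ∀ x ∉ D, ∃ y ∈ D, G.Adj x y ∧ deg G x ≤ deg G y

/-- The strong domination number of `G`. -/
noncomputable def gammaSt {V : Type*} (G : SimpleGraph V) : ℕ :=
  sInf {n | ∃ D : Set V, IsSDS G D ∧ D.ncard = n}

/-- The `r`-gluing of `G₁` and `G₂` along the `r`-cliques `s₁ : Fin r → V₁` and
`s₂ : Fin r → V₂` (identifying `s₁ i` with `s₂ i`); the glued clique vertices are the
vertices `Sum.inr i`. -/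
def glueClique {V₁ V₂ : Type*} (G₁ : SimpleGraph V₁) (G₂ : SimpleGraph V₂)
    {r : ℕ} (s₁ : Fin r → V₁) (s₂ : Fin r → V₂) :
    SimpleGraph (({x : V₁ // x ∉ Set.range s₁} ⊕ {x : V₂ // x ∉ Set.range s₂}) ⊕ Fin r) :=
  SimpleGraph.fromRel (fun a b =>
    match a, b with
    | .inl (.inl a), .inl (.inl b) => G₁.Adj a.1 b.1
    | .inl (.inr a), .inl (.inr b) => G₂.Adj a.1 b.1
    | .inr i, .inr j => i ≠ j
    | .inr i, .inl (.inl b) => G₁.Adj (s₁ i) b.1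
    | .inr i, .inl (.inr b) => G₂.Adj (s₂ i) b.1
    | _, _ => False)

section Aux

variable {V₁ V₂ : Type*} {r : ℕ} {s₁ : Fin r → V₁} {s₂ : Fin r → V₂}
  {G₁ : SimpleGraph V₁} {G₂ : SimpleGraph V₂}

lemma exists_min_sds {V : Type*} (G : SimpleGraph V) :
    ∃ D : Set V, IsSDS G D ∧ D.ncard = gammaSt G := by
  have hne : {n | ∃ D : Set V, IsSDS G D ∧ D.ncard = n}.Nonempty :=
    ⟨_, Set.univ, fun x hx => absurd (Set.mem_univ x) hx, rfl⟩
  exact Nat.sInf_mem hne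

lemma glue_adj_ll {a b : {x : V₁ // x ∉ Set.range s₁}} :
    (glueClique G₁ G₂ s₁ s₂).Adj (.inl (.inl a)) (.inl (.inl b)) ↔ G₁.Adj a.1 b.1 := by
  rw [glueClique, SimpleGraph.fromRel_adj]
  constructor
  · rintro ⟨-, h | h⟩
    · exact h
    · exact h.symm
  · intro h
    refine ⟨?_, Or.inl h⟩
    intro he
    injection he with he'
    injection he' with he''
    exact h.ne (congrArg Subtype.val he'')

lemma glue_adj_rr {i j : Fin r} :
    (glueClique G₁ G₂ s₁ s₂).Adj (.inr i) (.inr j) ↔ i ≠ j := by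
  rw [glueClique, SimpleGraph.fromRel_adj]
  constructor
  · rintro ⟨-, h | h⟩
    · exact h
    · exact h.symm
  · intro h
    exact ⟨by simpa using h, Or.inl h⟩

lemma glue_adj_rl {i : Fin r} {b : {x : V₁ // x ∉ Set.range s₁}} :
    (glueClique G₁ G₂ s₁ s₂).Adj (.inr i) (.inl (.inl b)) ↔ G₁.Adj (s₁ i) b.1 := by
  rw [glueClique, SimpleGraph.fromRel_adj]
  constructor
  · rintro ⟨-, h | h⟩
    · exact h
    · exact False.elim h
  · intro h
    exact ⟨by simp, Or.inl h⟩

lemma glue_adj_lr {i : Fin r} {b : {x : V₁ // x ∉ Set.range s₁}} :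
    (glueClique G₁ G₂ s₁ s₂).Adj (.inl (.inl b)) (.inr i) ↔ G₁.Adj b.1 (s₁ i) := by
  rw [adj_comm, glue_adj_rl, adj_comm]

lemma glue_not_adj_mixed {a : {x : V₁ // x ∉ Set.range s₁}} {b : {x : V₂ // x ∉ Set.range s₂}} :
    ¬ (glueClique G₁ G₂ s₁ s₂).Adj (.inl (.inl a)) (.inl (.inr b)) := by
  rw [glueClique, SimpleGraph.fromRel_adj]
  rintro ⟨-, h | h⟩ <;> exact h

lemma glue_adj_ll₂ {a b : {x : V₂ // x ∉ Set.range s₂}} :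
    (glueClique G₁ G₂ s₁ s₂).Adj (.inl (.inr a)) (.inl (.inr b)) ↔ G₂.Adj a.1 b.1 := by
  rw [glueClique, SimpleGraph.fromRel_adj]
  constructor
  · rintro ⟨-, h | h⟩
    · exact h
    · exact h.symm
  · intro h
    refine ⟨?_, Or.inl h⟩
    intro he
    injection he with he'
    injection he' with he''
    exact h.ne (congrArg Subtype.val he'')

lemma glue_adj_rl₂ {i : Fin r} {b : {x : V₂ // x ∉ Set.range s₂}} :
    (glueClique G₁ G₂ s₁ s₂).Adj (.inr i) (.inl (.inr b)) ↔ G₂.Adj (s₂ i) b.1 := by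
  rw [glueClique, SimpleGraph.fromRel_adj]
  constructor
  · rintro ⟨-, h | h⟩
    · exact h
    · exact False.elim h
  · intro h
    exact ⟨by simp, Or.inl h⟩

lemma glue_adj_lr₂ {i : Fin r} {b : {x : V₂ // x ∉ Set.range s₂}} :
    (glueClique G₁ G₂ s₁ s₂).Adj (.inl (.inr b)) (.inr i) ↔ G₂.Adj b.1 (s₂ i) := by
  rw [adj_comm, glue_adj_rl₂, adj_comm]

variable [Fintype V₁] [Fintype V₂]

/-- projection to `V₁` -/
noncomputable def pr1 (d : V₁) :
    (({x : V₁ // x ∉ Set.range s₁} ⊕ {x : V₂ // x ∉ Set.range s₂}) ⊕ Fin r) → V₁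
  | .inl (.inl a) => a.1
  | .inl (.inr _) => d
  | .inr i => s₁ i

noncomputable def pr2 (d : V₂) :
    (({x : V₁ // x ∉ Set.range s₁} ⊕ {x : V₂ // x ∉ Set.range s₂}) ⊕ Fin r) → V₂
  | .inl (.inl _) => d
  | .inl (.inr a) => a.1
  | .inr i => s₂ i

lemma deg_inl_inl (hinj₁ : Function.Injective s₁) (a : {x : V₁ // x ∉ Set.range s₁}) :
    deg (glueClique G₁ G₂ s₁ s₂) (.inl (.inl a)) = deg G₁ a.1 := by
  classical
  have himg : (pr1 (s₂ := s₂) a.1) '' ((glueClique G₁ G₂ s₁ s₂).neighborSet (.inl (.inl a))) = G₁.neighborSet a.1 := by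
    ext b
    constructor
    · rintro ⟨z, hz, rfl⟩
      rw [SimpleGraph.mem_neighborSet] at hz
      obtain ((c | c) | i) := z
      · exact glue_adj_ll.mp hz
      · exact absurd hz glue_not_adj_mixed
      · exact glue_adj_lr.mp hz
    · intro hb
      rw [Set.mem_image]
      simp only [SimpleGraph.mem_neighborSet]
      by_cases hb' : b ∈ Set.range s₁
      · obtain ⟨i, rfl⟩ := hb'
        exact ⟨.inr i, glue_adj_lr.mpr hb, rfl⟩
      · exact ⟨.inl (.inl ⟨b, hb'⟩), glue_adj_ll.mpr hb, rfl⟩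
  have hinjOn : Set.InjOn (pr1 (s₂ := s₂) a.1) ((glueClique G₁ G₂ s₁ s₂).neighborSet (.inl (.inl a))) := by
    intro z hz z' hz' he
    rw [SimpleGraph.mem_neighborSet] at hz hz'
    obtain ((c | c) | i) := z <;> obtain ((c' | c') | j) := z'
    · exact congrArg _ (congrArg _ (Subtype.ext he))
    · exact absurd hz' glue_not_adj_mixed
    · exact absurd ⟨j, he.symm⟩ c.2
    · exact absurd hz glue_not_adj_mixed
    · exact absurd hz glue_not_adj_mixed
    · exact absurd hz glue_not_adj_mixed
    · exact absurd ⟨i, he⟩ c'.2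
    · exact absurd hz' glue_not_adj_mixed
    · exact congrArg _ (hinj₁ he)
  have := Set.ncard_image_of_injOn hinjOn
  rw [himg] at this
  exact (this.symm : _)

lemma deg_inl_inr (hinj₂ : Function.Injective s₂) (a : {x : V₂ // x ∉ Set.range s₂}) :
    deg (glueClique G₁ G₂ s₁ s₂) (.inl (.inr a)) = deg G₂ a.1 := by
  classical
  have himg : (pr2 (s₁ := s₁) a.1) '' ((glueClique G₁ G₂ s₁ s₂).neighborSet (.inl (.inr a))) = G₂.neighborSet a.1 := by
    ext b
    constructor
    · rintro ⟨z, hz, rfl⟩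
      rw [SimpleGraph.mem_neighborSet] at hz
      obtain ((c | c) | i) := z
      · exact absurd (SimpleGraph.Adj.symm hz) glue_not_adj_mixed
      · exact glue_adj_ll₂.mp hz
      · exact glue_adj_lr₂.mp hz
    · intro hb
      rw [Set.mem_image]
      simp only [SimpleGraph.mem_neighborSet]
      by_cases hb' : b ∈ Set.range s₂
      · obtain ⟨i, rfl⟩ := hb'
        exact ⟨.inr i, glue_adj_lr₂.mpr hb, rfl⟩
      · exact ⟨.inl (.inr ⟨b, hb'⟩), glue_adj_ll₂.mpr hb, rfl⟩
  have hinjOn : Set.InjOn (pr2 (s₁ := s₁) a.1) ((glueClique G₁ G₂ s₁ s₂).neighborSet (.inl (.inr a))) := by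
    intro z hz z' hz' he
    rw [SimpleGraph.mem_neighborSet] at hz hz'
    obtain ((c | c) | i) := z <;> obtain ((c' | c') | j) := z'
    · exact absurd (SimpleGraph.Adj.symm hz) glue_not_adj_mixed
    · exact absurd (SimpleGraph.Adj.symm hz) glue_not_adj_mixed
    · exact absurd (SimpleGraph.Adj.symm hz) glue_not_adj_mixed
    · exact absurd (SimpleGraph.Adj.symm hz') glue_not_adj_mixed
    · exact congrArg _ (congrArg _ (Subtype.ext he))
    · exact absurd ⟨j, he.symm⟩ c.2
    · exact absurd (SimpleGraph.Adj.symm hz') glue_not_adj_mixed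
    · exact absurd ⟨i, he⟩ c'.2
    · exact congrArg _ (hinj₂ he)
  have := Set.ncard_image_of_injOn hinjOn
  rw [himg] at this
  exact (this.symm : _)

lemma deg_le_inr₁ (hinj₁ : Function.Injective s₁) (i : Fin r) :
    deg G₁ (s₁ i) ≤ deg (glueClique G₁ G₂ s₁ s₂) (.inr i) := by
  classical
  have hsub : G₁.neighborSet (s₁ i) ⊆ (pr1 (s₂ := s₂) (s₁ i)) '' ((glueClique G₁ G₂ s₁ s₂).neighborSet (.inr i)) := by
    intro b hb
    rw [SimpleGraph.mem_neighborSet] at hb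
    rw [Set.mem_image]
    simp only [SimpleGraph.mem_neighborSet]
    by_cases hb' : b ∈ Set.range s₁
    · obtain ⟨j, rfl⟩ := hb'
      have hij : i ≠ j := by
        rintro rfl
        exact G₁.irrefl hb
      exact ⟨.inr j, glue_adj_rr.mpr hij, rfl⟩
    · exact ⟨.inl (.inl ⟨b, hb'⟩), glue_adj_rl.mpr hb, rfl⟩
  calc deg G₁ (s₁ i) ≤ ((pr1 (s₂ := s₂) (s₁ i)) '' ((glueClique G₁ G₂ s₁ s₂).neighborSet (.inr i))).ncard :=
        Set.ncard_le_ncard hsub (Set.toFinite _)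
    _ ≤ ((glueClique G₁ G₂ s₁ s₂).neighborSet (.inr i)).ncard := Set.ncard_image_le (Set.toFinite _)

lemma deg_le_inr₂ (hinj₂ : Function.Injective s₂) (i : Fin r) :
    deg G₂ (s₂ i) ≤ deg (glueClique G₁ G₂ s₁ s₂) (.inr i) := by
  classical
  have hsub : G₂.neighborSet (s₂ i) ⊆ (pr2 (s₁ := s₁) (s₂ i)) '' ((glueClique G₁ G₂ s₁ s₂).neighborSet (.inr i)) := by
    intro b hb
    rw [SimpleGraph.mem_neighborSet] at hb
    rw [Set.mem_image]
    simp only [SimpleGraph.mem_neighborSet]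
    by_cases hb' : b ∈ Set.range s₂
    · obtain ⟨j, rfl⟩ := hb'
      have hij : i ≠ j := by
        rintro rfl
        exact G₂.irrefl hb
      exact ⟨.inr j, glue_adj_rr.mpr hij, rfl⟩
    · exact ⟨.inl (.inr ⟨b, hb'⟩), glue_adj_rl₂.mpr hb, rfl⟩
  calc deg G₂ (s₂ i) ≤ ((pr2 (s₁ := s₁) (s₂ i)) '' ((glueClique G₁ G₂ s₁ s₂).neighborSet (.inr i))).ncard :=
        Set.ncard_le_ncard hsub (Set.toFinite _)
    _ ≤ ((glueClique G₁ G₂ s₁ s₂).neighborSet (.inr i)).ncard := Set.ncard_image_le (Set.toFinite _)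

end Aux

/-- Upper bound for the strong domination number of the `r`-gluing (`r ≥ 2`) of two
connected graphs of order at least `r + 1`, each containing an `r`-clique. -/
theorem stmt_6 {V₁ V₂ : Type*} [Fintype V₁] [Fintype V₂]
    (G₁ : SimpleGraph V₁) (G₂ : SimpleGraph V₂)
    (hc₁ : G₁.Connected) (hc₂ : G₂.Connected)
    {r : ℕ} (hr : 2 ≤ r)
    (hn₁ : r + 1 ≤ Fintype.card V₁) (hn₂ : r + 1 ≤ Fintype.card V₂)
    (s₁ : Fin r → V₁) (s₂ : Fin r → V₂)
    (hinj₁ : Function.Injective s₁) (hinj₂ : Function.Injective s₂)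
    (hclique₁ : ∀ i j, i ≠ j → G₁.Adj (s₁ i) (s₁ j))
    (hclique₂ : ∀ i j, i ≠ j → G₂.Adj (s₂ i) (s₂ j)) :
    gammaSt (glueClique G₁ G₂ s₁ s₂) ≤ gammaSt G₁ + gammaSt G₂ + 1 := by
  classical
  obtain ⟨D₁, hD₁, hc1⟩ := exists_min_sds G₁
  obtain ⟨D₂, hD₂, hc2⟩ := exists_min_sds G₂
  haveI : Nonempty (Fin r) := ⟨⟨0, by omega⟩⟩
  obtain ⟨u, hu⟩ := Finite.exists_max
    (fun i : Fin r => deg (glueClique G₁ G₂ s₁ s₂) (.inr i))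
  set D : Set (({x : V₁ // x ∉ Set.range s₁} ⊕ {x : V₂ // x ∉ Set.range s₂}) ⊕ Fin r) :=
    {z | match z with
      | .inl (.inl a) => a.1 ∈ D₁
      | .inl (.inr a) => a.1 ∈ D₂
      | .inr i => s₁ i ∈ D₁ ∨ s₂ i ∈ D₂ ∨ i = u} with hD
  have hSDS : IsSDS (glueClique G₁ G₂ s₁ s₂) D := by
    rintro ((a | a) | i) hx
    · have ha : a.1 ∉ D₁ := hx
      obtain ⟨y, hyD, hyadj, hydeg⟩ := hD₁ a.1 ha
      by_cases hy : y ∈ Set.range s₁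
      · obtain ⟨j, rfl⟩ := hy
        refine ⟨.inr j, Or.inl hyD, glue_adj_lr.mpr hyadj, ?_⟩
        rw [deg_inl_inl hinj₁]
        exact hydeg.trans (deg_le_inr₁ hinj₁ j)
      · refine ⟨.inl (.inl ⟨y, hy⟩), hyD, glue_adj_ll.mpr hyadj, ?_⟩
        rw [deg_inl_inl hinj₁, deg_inl_inl hinj₁]
        exact hydeg
    · have ha : a.1 ∉ D₂ := hx
      obtain ⟨y, hyD, hyadj, hydeg⟩ := hD₂ a.1 ha
      by_cases hy : y ∈ Set.range s₂
      · obtain ⟨j, rfl⟩ := hy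
        refine ⟨.inr j, Or.inr (Or.inl hyD), glue_adj_lr₂.mpr hyadj, ?_⟩
        rw [deg_inl_inr hinj₂]
        exact hydeg.trans (deg_le_inr₂ hinj₂ j)
      · refine ⟨.inl (.inr ⟨y, hy⟩), hyD, glue_adj_ll₂.mpr hyadj, ?_⟩
        rw [deg_inl_inr hinj₂, deg_inl_inr hinj₂]
        exact hydeg
    · have hiu : i ≠ u := fun h => hx (Or.inr (Or.inr h))
      exact ⟨.inr u, Or.inr (Or.inr rfl), glue_adj_rr.mpr hiu, hu i⟩
  have hle : gammaSt (glueClique G₁ G₂ s₁ s₂) ≤ D.ncard := Nat.sInf_le ⟨D, hSDS, rfl⟩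
  refine hle.trans ?_
  set A : Set (({x : V₁ // x ∉ Set.range s₁} ⊕ {x : V₂ // x ∉ Set.range s₂}) ⊕ Fin r) :=
    {z | match z with
      | .inl (.inl a) => a.1 ∈ D₁
      | .inl (.inr _) => False
      | .inr i => s₁ i ∈ D₁} with hA
  set B : Set (({x : V₁ // x ∉ Set.range s₁} ⊕ {x : V₂ // x ∉ Set.range s₂}) ⊕ Fin r) :=
    {z | match z with
      | .inl (.inl _) => False
      | .inl (.inr a) => a.1 ∈ D₂
      | .inr i => s₂ i ∈ D₂} with hB
  have hsub : D ⊆ A ∪ B ∪ {Sum.inr u} := by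
    rintro ((a | a) | i) hz
    · exact Or.inl (Or.inl hz)
    · exact Or.inl (Or.inr hz)
    · rcases hz with h | h | h
      · exact Or.inl (Or.inl h)
      · exact Or.inl (Or.inr h)
      · exact Or.inr (by simp [h])
  have hnonempty₁ : Nonempty V₁ := Fintype.card_pos_iff.mp (by omega)
  have hnonempty₂ : Nonempty V₂ := Fintype.card_pos_iff.mp (by omega)
  have hAcard : A.ncard ≤ D₁.ncard := by
    refine Set.ncard_le_ncard_of_injOn (pr1 (s₂ := s₂) (Classical.arbitrary V₁)) ?_ ?_
      (Set.toFinite _)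
    · rintro ((a | a) | i) h
      · exact h
      · exact absurd h id
      · exact h
    · rintro ((c | c) | i) hz ((c' | c') | j) hz' he
      · exact congrArg _ (congrArg _ (Subtype.ext he))
      · exact absurd hz' id
      · exact absurd ⟨j, he.symm⟩ c.2
      · exact absurd hz id
      · exact absurd hz id
      · exact absurd hz id
      · exact absurd ⟨i, he⟩ c'.2
      · exact absurd hz' id
      · exact congrArg _ (hinj₁ he)
  have hBcard : B.ncard ≤ D₂.ncard := by
    refine Set.ncard_le_ncard_of_injOn (pr2 (s₁ := s₁) (Classical.arbitrary V₂)) ?_ ?_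
      (Set.toFinite _)
    · rintro ((a | a) | i) h
      · exact absurd h id
      · exact h
      · exact h
    · rintro ((c | c) | i) hz ((c' | c') | j) hz' he
      · exact absurd hz id
      · exact absurd hz id
      · exact absurd hz id
      · exact absurd hz' id
      · exact congrArg _ (congrArg _ (Subtype.ext he))
      · exact absurd ⟨j, he.symm⟩ c.2
      · exact absurd hz' id
      · exact absurd ⟨i, he⟩ c'.2
      · exact congrArg _ (hinj₂ he)
  calc D.ncard ≤ (A ∪ B ∪ {Sum.inr u}).ncard := Set.ncard_le_ncard hsub (Set.toFinite _)
    _ ≤ (A ∪ B).ncard + ({Sum.inr u} : Set _).ncard := Set.ncard_union_le _ _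
    _ ≤ A.ncard + B.ncard + 1 := by
        have := Set.ncard_union_le A B
        rw [Set.ncard_singleton]
        omega
    _ ≤ D₁.ncard + D₂.ncard + 1 := by omega
    _ = gammaSt G₁ + gammaSt G₂ + 1 := by rw [hc1, hc2]
end

section
/- Let G be the circuit of pairwise disjoint connected graphs G₁, …, G_n (n ≥ 3) with respect to vertices x_i ∈ V(G_i), formed by adding the cycle edges x_1x_2, …, x_{n−1}x_n, x_nx_1 to the disjoint union. Then γ_st(G) ≤ (Σ_{i=1}^{n} γ_st(G_i)) + ⌊n/2⌋. -/
open SimpleGraph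

/-- The circuit of the graphs `G i` with respect to the vertices `x i`: the disjoint union
of the `G i` together with the cycle edges `(x 0)(x 1), …, (x (n-1))(x 0)`. -/
def circuitGraph {n : ℕ} {V : Fin n → Type*} (G : ∀ i, SimpleGraph (V i)) (x : ∀ i, V i) :
    SimpleGraph (Σ i, V i) :=
  SimpleGraph.fromRel (fun a b =>
    (∃ (i : Fin n) (p q : V i), a = ⟨i, p⟩ ∧ b = ⟨i, q⟩ ∧ (G i).Adj p q) ∨
    (∃ (i j : Fin n), ((j : ℕ) = (i : ℕ) + 1 ∨ ((i : ℕ) = n - 1 ∧ (j : ℕ) = 0)) ∧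
      a = ⟨i, x i⟩ ∧ b = ⟨j, x j⟩))

/-!
Choose a minimum strong dominating set `D i` of each `G i`. Passing to the circuit raises
only the degrees of the `x i`, each by `2`, so `⋃ D i` still strongly dominates every vertex
other than the `x i`. The `x i` themselves form a cycle weighted by `deg (G i) (x i)`, and
at most `⌊n/2⌋` of them dominate the others along cycle edges with a weight at least as
large, which in the circuit is a degree at least as large.
-/

theorem isSDS_univ {V : Type*} (G : SimpleGraph V) : IsSDS G Set.univ :=
  fun _ hx => absurd (Set.mem_univ _) hx

theorem gammaSt_le_ncard {V : Type*} {G : SimpleGraph V} {D : Set V} (hD : IsSDS G D) :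
    gammaSt G ≤ D.ncard :=
  Nat.sInf_le ⟨D, hD, rfl⟩

theorem exists_isSDS_ncard_eq_gammaSt {V : Type*} (G : SimpleGraph V) :
    ∃ D, IsSDS G D ∧ D.ncard = gammaSt G :=
  Nat.sInf_mem (s := {n | ∃ D : Set V, IsSDS G D ∧ D.ncard = n}) ⟨_, Set.univ, isSDS_univ G, rfl⟩

namespace Fin

theorem cycle_succ_iff {n : ℕ} (i j : Fin (n + 1)) :
    ((j : ℕ) = i + 1 ∨ ((i : ℕ) = n + 1 - 1 ∧ (j : ℕ) = 0)) ↔ j = i + 1 := by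
  rw [Fin.ext_iff, Fin.val_add_one]
  split_ifs with h <;> simp only [Fin.ext_iff, Fin.val_last] at h <;> omega

theorem add_one_ne_sub_one {m : ℕ} (a : Fin (m + 3)) : a + 1 ≠ a - 1 := by
  rw [Ne, ← sub_eq_zero, add_sub_sub_cancel]
  simp [Fin.ext_iff, Fin.val_add, Nat.mod_eq_of_lt]

end Fin

section WeightedCycle

variable {α : Type*} [LinearOrder α]

def heavierOfPair (f : ℕ → α) (k : ℕ) : ℕ :=
  if f (2 * k) ≤ f (2 * k + 1) then 2 * k + 1 else 2 * k

theorem heavierOfPair_eq_or_adj (f : ℕ → α) (r : ℕ) :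
    heavierOfPair f (r / 2) = r ∨
      ((heavierOfPair f (r / 2) = r + 1 ∨ r = heavierOfPair f (r / 2) + 1) ∧
        f r ≤ f (heavierOfPair f (r / 2))) := by
  obtain ⟨k, rfl | rfl⟩ := Nat.even_or_odd' r
  · have hk : 2 * k / 2 = k := by omega
    rw [hk, heavierOfPair]
    split_ifs with h
    · exact Or.inr ⟨Or.inl rfl, h⟩
    · exact Or.inl rfl
  · have hk : (2 * k + 1) / 2 = k := by omega
    rw [hk, heavierOfPair]
    split_ifs with h
    · exact Or.inl rfl
    · exact Or.inr ⟨Or.inr rfl, (not_le.mp h).le⟩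

open Fin.NatCast Fin.CommRing in
theorem exists_cycle_dominating_finset {m : ℕ} (w : Fin (m + 3) → α) :
    ∃ S : Finset (Fin (m + 3)), S.card ≤ (m + 3) / 2 ∧
      ∀ i ∉ S, ∃ j ∈ S, (j = i + 1 ∨ i = j + 1) ∧ w i ≤ w j := by
  -- The heaviest vertex `M` dominates `M + 1` and `M - 1 = M + (m + 2)`; the path
  -- `M + 2, …, M + (m + 1)` is cut into the pairs `{M + 2k, M + (2k + 1)}`.
  obtain ⟨M, -, hM⟩ := Finset.univ.exists_max_image w Finset.univ_nonempty
  set u : ℕ → Fin (m + 3) := fun r => M + r with hu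
  have hu_succ (r : ℕ) : u (r + 1) = u r + 1 := by simp only [hu]; push_cast; ring
  set f := w ∘ u
  set P := (Finset.Icc 1 ((m + 1) / 2)).image (u ∘ heavierOfPair f)
  refine ⟨insert M P, ?_, ?_⟩
  · calc (insert M P).card ≤ P.card + 1 := Finset.card_insert_le _ _
      _ ≤ (Finset.Icc 1 ((m + 1) / 2)).card + 1 := by gcongr; exact Finset.card_image_le
      _ ≤ (m + 3) / 2 := by rw [Nat.card_Icc]; omega
  intro i hi
  obtain ⟨r, hr, rfl⟩ : ∃ r < m + 3, i = u r :=
    ⟨(i - M : Fin (m + 3)), (i - M).isLt, by simp only [hu, Fin.cast_val_eq_self]; ring⟩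
  have hMS : M ∈ insert M P := Finset.mem_insert_self _ _
  have hu0 : u 0 = M := by simp [hu]
  obtain rfl | rfl | ⟨hr2, hrm⟩ | rfl : r = 0 ∨ r = 1 ∨ 2 ≤ r ∧ r ≤ m + 1 ∨ r = m + 2 := by omega
  · exact absurd (hu0 ▸ hMS) hi
  · exact ⟨M, hMS, Or.inr (by rw [← hu0, ← hu_succ]), hM _ (Finset.mem_univ _)⟩
  · have hk : r / 2 ∈ Finset.Icc 1 ((m + 1) / 2) := Finset.mem_Icc.mpr ⟨by omega, by omega⟩
    have hPS : u (heavierOfPair f (r / 2)) ∈ insert M P :=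
      Finset.mem_insert_of_mem (Finset.mem_image_of_mem _ hk)
    rcases heavierOfPair_eq_or_adj f r with heq | ⟨hadj, hle⟩
    · exact absurd (heq ▸ hPS) hi
    · refine ⟨_, hPS, ?_, hle⟩
      rcases hadj with hadj | hadj
      · exact Or.inl (by rw [hadj, hu_succ])
      · exact Or.inr (by rw [← hu_succ, ← hadj])
  · refine ⟨M, hMS, Or.inl ?_, hM _ (Finset.mem_univ _)⟩
    rw [← hu_succ, hu]
    simp only [show m + 2 + 1 = m + 3 from rfl, Fin.natCast_self, add_zero]

end WeightedCycle

namespace circuitGraph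

variable {m : ℕ} {V : Fin (m + 3) → Type*} (G : ∀ i, SimpleGraph (V i)) (x : ∀ i, V i)

theorem adj_mk_iff (i : Fin (m + 3)) (p : V i) (b : Σ j, V j) :
    (circuitGraph G x).Adj ⟨i, p⟩ b ↔
      (∃ q, (G i).Adj p q ∧ b = ⟨i, q⟩) ∨
        (p = x i ∧ (b = ⟨i + 1, x (i + 1)⟩ ∨ b = ⟨i - 1, x (i - 1)⟩)) := by
  simp only [circuitGraph, fromRel_adj, Fin.cycle_succ_iff, Sigma.mk.inj_iff]
  constructor
  · rintro ⟨-, (⟨i', p', q', ⟨rfl, hp⟩, rfl, hadj⟩ | ⟨i', j', rfl, ⟨rfl, hp⟩, rfl⟩) |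
      (⟨i', p', q', rfl, ⟨rfl, hp⟩, hadj⟩ | ⟨i', j', rfl, rfl, ⟨rfl, hp⟩⟩)⟩ <;>
      obtain rfl := eq_of_heq hp
    · exact Or.inl ⟨q', hadj, rfl⟩
    · exact Or.inr ⟨rfl, Or.inl rfl⟩
    · exact Or.inl ⟨p', hadj.symm, rfl⟩
    · exact Or.inr ⟨rfl, Or.inr (by rw [add_sub_cancel_right])⟩
  · rintro (⟨q, hadj, rfl⟩ | ⟨rfl, rfl | rfl⟩)
    · exact ⟨fun h => hadj.ne (eq_of_heq (Sigma.mk.inj_iff.mp h).2),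
        Or.inl (Or.inl ⟨i, p, q, ⟨rfl, .rfl⟩, rfl, hadj⟩)⟩
    · refine ⟨fun h => ?_, Or.inl (Or.inr ⟨i, i + 1, rfl, ⟨rfl, .rfl⟩, rfl⟩)⟩
      exact absurd (congrArg Sigma.fst h).symm (by simp)
    · refine ⟨fun h => ?_,
        Or.inr (Or.inr ⟨i - 1, i, (sub_add_cancel i 1).symm, rfl, ⟨rfl, .rfl⟩⟩)⟩
      exact absurd (congrArg Sigma.fst h).symm (by simp)

theorem neighborSet_mk_of_ne {i : Fin (m + 3)} {p : V i} (hp : p ≠ x i) :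
    (circuitGraph G x).neighborSet ⟨i, p⟩ = Sigma.mk i '' (G i).neighborSet p := by
  ext b
  simp only [mem_neighborSet, adj_mk_iff, hp, false_and, or_false, Set.mem_image]
  exact ⟨fun ⟨q, hq, hb⟩ => ⟨q, hq, hb.symm⟩, fun ⟨q, hq, hb⟩ => ⟨q, hq, hb.symm⟩⟩

theorem neighborSet_mk_self (i : Fin (m + 3)) :
    (circuitGraph G x).neighborSet ⟨i, x i⟩ =
      Sigma.mk i '' (G i).neighborSet (x i) ∪ {⟨i + 1, x (i + 1)⟩, ⟨i - 1, x (i - 1)⟩} := by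
  ext b
  simp only [mem_neighborSet, adj_mk_iff, true_and, Set.mem_union, Set.mem_image,
    Set.mem_insert_iff, Set.mem_singleton_iff]
  exact or_congr_left ⟨fun ⟨q, hq, hb⟩ => ⟨q, hq, hb.symm⟩, fun ⟨q, hq, hb⟩ => ⟨q, hq, hb.symm⟩⟩

theorem deg_mk_of_ne {i : Fin (m + 3)} {p : V i} (hp : p ≠ x i) :
    deg (circuitGraph G x) ⟨i, p⟩ = deg (G i) p := by
  rw [deg, neighborSet_mk_of_ne G x hp, Set.ncard_image_of_injective _ sigma_mk_injective, deg]

theorem deg_mk_self [∀ i, Finite (V i)] (i : Fin (m + 3)) :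
    deg (circuitGraph G x) ⟨i, x i⟩ = deg (G i) (x i) + 2 := by
  have hdisj : Disjoint (Sigma.mk i '' (G i).neighborSet (x i))
      {(⟨i + 1, x (i + 1)⟩ : Σ j, V j), ⟨i - 1, x (i - 1)⟩} := by
    rw [Set.disjoint_left]
    rintro _ ⟨q, -, rfl⟩ (h | h) <;>
      exact absurd (congrArg Sigma.fst h) (by simp [eq_sub_iff_add_eq])
  have hpair : ({⟨i + 1, x (i + 1)⟩, ⟨i - 1, x (i - 1)⟩} : Set (Σ j, V j)).ncard = 2 :=
    Set.ncard_pair fun h => Fin.add_one_ne_sub_one i (congrArg Sigma.fst h)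
  rw [deg, neighborSet_mk_self, Set.ncard_union_eq hdisj, hpair,
    Set.ncard_image_of_injective _ sigma_mk_injective, deg]

theorem deg_le_deg_mk [∀ i, Finite (V i)] (i : Fin (m + 3)) (p : V i) :
    deg (G i) p ≤ deg (circuitGraph G x) ⟨i, p⟩ := by
  obtain rfl | hp := eq_or_ne p (x i)
  · rw [deg_mk_self]; omega
  · rw [deg_mk_of_ne G x hp]

end circuitGraph

section CircuitDominatingSet

variable {n : ℕ} {V : Fin n → Type*}

def circuitDomSet (x : ∀ i, V i) (D : ∀ i, Set (V i)) (S : Finset (Fin n)) : Set (Σ i, V i) :=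
  (⋃ i, Sigma.mk i '' D i) ∪ (fun j => ⟨j, x j⟩) '' S

theorem mem_circuitDomSet {x : ∀ i, V i} {D : ∀ i, Set (V i)} {S : Finset (Fin n)}
    {i : Fin n} {p : V i} : ⟨i, p⟩ ∈ circuitDomSet x D S ↔ p ∈ D i ∨ (i ∈ S ∧ p = x i) := by
  simp only [circuitDomSet, Set.mem_union, Set.mem_iUnion, Set.mem_image, Sigma.mk.injEq,
    Finset.mem_coe]
  constructor
  · rintro (⟨j, q, hq, rfl, hqp⟩ | ⟨j, hj, rfl, hjp⟩)
    · exact Or.inl (eq_of_heq hqp ▸ hq)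
    · exact Or.inr ⟨hj, (eq_of_heq hjp).symm⟩
  · rintro (hp | ⟨hi, rfl⟩)
    · exact Or.inl ⟨i, p, hp, rfl, .rfl⟩
    · exact Or.inr ⟨i, hi, rfl, .rfl⟩

theorem ncard_circuitDomSet_le (x : ∀ i, V i) (D : ∀ i, Set (V i)) (S : Finset (Fin n)) :
    (circuitDomSet x D S).ncard ≤ ∑ i, (D i).ncard + S.card := by
  calc (circuitDomSet x D S).ncard
      ≤ (⋃ i, Sigma.mk i '' D i).ncard + ((fun j => (⟨j, x j⟩ : Σ i, V i)) '' S).ncard :=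
        Set.ncard_union_le _ _
    _ ≤ ∑ i, (Sigma.mk i '' D i).ncard + (S : Set (Fin n)).ncard := by
        gcongr
        · exact Set.ncard_iUnion_le_of_fintype _
        · exact Set.ncard_image_le (Finset.finite_toSet S)
    _ = ∑ i, (D i).ncard + S.card := by
        simp only [Set.ncard_image_of_injective _ sigma_mk_injective, Set.ncard_coe_finset]

end CircuitDominatingSet

theorem isSDS_circuitDomSet {m : ℕ} {V : Fin (m + 3) → Type*} [∀ i, Finite (V i)]
    (G : ∀ i, SimpleGraph (V i)) (x : ∀ i, V i) {D : ∀ i, Set (V i)}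
    (hD : ∀ i, IsSDS (G i) (D i)) {S : Finset (Fin (m + 3))}
    (hS : ∀ i ∉ S, ∃ j ∈ S, (j = i + 1 ∨ i = j + 1) ∧ deg (G i) (x i) ≤ deg (G j) (x j)) :
    IsSDS (circuitGraph G x) (circuitDomSet x D S) := by
  rintro ⟨i, p⟩ hp
  rw [mem_circuitDomSet, not_or, not_and] at hp
  obtain rfl | hpx := eq_or_ne p (x i)
  · obtain ⟨j, hj, hij, hdeg⟩ := hS i fun hi => hp.2 hi rfl
    refine ⟨⟨j, x j⟩, mem_circuitDomSet.mpr (Or.inr ⟨hj, rfl⟩), ?_, ?_⟩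
    · rw [circuitGraph.adj_mk_iff]
      refine Or.inr ⟨rfl, ?_⟩
      rcases hij with rfl | rfl
      · exact Or.inl rfl
      · exact Or.inr (by rw [add_sub_cancel_right])
    · rw [circuitGraph.deg_mk_self, circuitGraph.deg_mk_self]
      omega
  · obtain ⟨y, hy, hpy, hdeg⟩ := hD i p hp.1
    refine ⟨⟨i, y⟩, mem_circuitDomSet.mpr (Or.inl hy),
      (circuitGraph.adj_mk_iff G x i p _).mpr (Or.inl ⟨y, hpy, rfl⟩), ?_⟩
    rw [circuitGraph.deg_mk_of_ne G x hpx]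
    exact hdeg.trans (circuitGraph.deg_le_deg_mk G x i y)

theorem stmt_14_general {n : ℕ} (hn : 3 ≤ n) {V : Fin n → Type*} [∀ i, Fintype (V i)]
    (G : ∀ i, SimpleGraph (V i)) (x : ∀ i, V i) :
    gammaSt (circuitGraph G x) ≤ (∑ i, gammaSt (G i)) + n / 2 := by
  obtain ⟨m, rfl⟩ : ∃ m, n = m + 3 := ⟨n - 3, by omega⟩
  choose D hD hDcard using fun i => exists_isSDS_ncard_eq_gammaSt (G i)
  obtain ⟨S, hScard, hS⟩ := exists_cycle_dominating_finset fun i => deg (G i) (x i)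
  calc gammaSt (circuitGraph G x)
      ≤ (circuitDomSet x D S).ncard := gammaSt_le_ncard (isSDS_circuitDomSet G x hD hS)
    _ ≤ ∑ i, (D i).ncard + S.card := ncard_circuitDomSet_le x D S
    _ ≤ (∑ i, gammaSt (G i)) + (m + 3) / 2 := by simp only [hDcard]; omega

/-- Upper bound on the strong domination number of the circuit of `n ≥ 3` pairwise
disjoint connected graphs. -/
theorem stmt_14 {n : ℕ} (hn : 3 ≤ n) {V : Fin n → Type*} [∀ i, Fintype (V i)]
    (G : ∀ i, SimpleGraph (V i)) (hconn : ∀ i, (G i).Connected) (x : ∀ i, V i) :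
    gammaSt (circuitGraph G x) ≤ (∑ i, gammaSt (G i)) + n / 2 :=
  stmt_14_general hn G x
end
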